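/- arXiv:2110.13452 — 6 statements merged into one kernel-verified Lean document; each statement's English description precedes it below -/
import Mathlib

section
/- Let d ≥ 1, let σ > 0, let μ, μ* ∈ ℝ^d and let Σ ∈ ℝ^{d×d} be positive definite. Then MMD(N(·;μ,Σ), N(·;μ*,Σ)) = (2 / √det(2(1/σ²)Σ + I)) · (1 − exp(-(1/(2σ²)) (μ-μ*)ᵀ (2(1/σ²)Σ + I)⁻¹ (μ-μ*))). -/
/-!
Diagonalise `S` in an orthonormal eigenbasis. The RBF kernel is invariant under this rotation and
both Gaussian densities factor over the eigencoordinates, so each of the three terms of the MMD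
is a product of one-dimensional integrals `∫∫ exp (-(s - t)² / (2σ²)) N(s; a, λ) N(t; b, λ)`.
Completing the square twice gives `m^(-1/2) exp (-(a - b)² / (2σ² m))` with `m = 2λ/σ² + 1`.
These `m` are the eigenvalues of `2S/σ² + 1` on the same eigenbasis, so their product is its
determinant and the exponents add up to the quadratic form of its inverse.
-/

open MeasureTheory Matrix Real

/-- The multivariate Gaussian density `N(z; μ, Σ)` on `ℝ^d`. -/
noncomputable def gaussianDensity {d : ℕ} (μ : EuclideanSpace ℝ (Fin d))
    (S : Matrix (Fin d) (Fin d) ℝ) (z : EuclideanSpace ℝ (Fin d)) : ℝ :=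
  (2 * Real.pi) ^ (-(d : ℝ) / 2) * S.det ^ (-(1 : ℝ) / 2) *
    Real.exp (-(1 / 2) * ((z - μ) ⬝ᵥ (S⁻¹ *ᵥ (z - μ))))

/-- The Gaussian RBF kernel with width parameter `σ`. -/
noncomputable def rbfKernel {d : ℕ} (σ : ℝ) (x y : EuclideanSpace ℝ (Fin d)) : ℝ :=
  Real.exp (-‖x - y‖ ^ 2 / (2 * σ ^ 2))

/-- The population MMD objective between two densities `p` and `q` on `ℝ^d`. -/
noncomputable def mmd {d : ℕ} (σ : ℝ) (p q : EuclideanSpace ℝ (Fin d) → ℝ) : ℝ :=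
  (∫ x, ∫ x', rbfKernel σ x x' * p x * p x') +
    (∫ y, ∫ y', rbfKernel σ y y' * q y * q y') -
    2 * ∫ x, ∫ y, rbfKernel σ x y * p x * q y

section Eigenbasis

variable {n : Type*} [Fintype n] {A : Matrix n n ℝ}
  (b : OrthonormalBasis n ℝ (EuclideanSpace ℝ n)) {ν : n → ℝ}

lemma dotProduct_mulVec_eq_sum_of_mulVec_eq_smul (hA : ∀ i, A *ᵥ b i = ν i • b i)
    (w : EuclideanSpace ℝ n) : w ⬝ᵥ (A *ᵥ w) = ∑ i, ν i * b.repr w i ^ 2 := by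
  have hAw : A *ᵥ w = ∑ i, (ν i * b.repr w i) • ⇑(b i) := by
    conv_lhs => rw [← b.sum_repr w]
    simp only [WithLp.ofLp_sum, WithLp.ofLp_smul, mulVec_sum, mulVec_smul, hA, smul_smul,
      mul_comm]
  have hdot : ∀ i, (w : n → ℝ) ⬝ᵥ b i = b.repr w i := fun i ↦ by
    rw [b.repr_apply_apply, EuclideanSpace.inner_eq_star_dotProduct, star_trivial,
      dotProduct_comm]
  simp only [hAw, dotProduct_sum, dotProduct_smul, hdot, smul_eq_mul]
  exact Finset.sum_congr rfl fun i _ ↦ by ring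

lemma det_eq_prod_of_mulVec_eq_smul [DecidableEq n] (hA : ∀ i, A *ᵥ b i = ν i • b i) :
    A.det = ∏ i, ν i := by
  have hdiag : LinearMap.toMatrix b.toBasis b.toBasis (toLpLin 2 2 A) = diagonal ν := by
    ext i j
    rcases eq_or_ne i j with rfl | hij
    · simp [LinearMap.toMatrix_apply, toLpLin_apply, hA]
    · simp [LinearMap.toMatrix_apply, toLpLin_apply, hA, hij]
  rw [← det_diagonal, ← hdiag, LinearMap.det_toMatrix, toLpLin_eq_toLin, LinearMap.det_toLin]

end Eigenbasis

lemma inv_mulVec_eq_smul_of_mulVec_eq_smul {n : Type*} [Fintype n] [DecidableEq n]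
    {A : Matrix n n ℝ} (hA : IsUnit A.det) {v : n → ℝ} {c : ℝ} (h : A *ᵥ v = c • v) :
    A⁻¹ *ᵥ v = c⁻¹ • v := by
  have hv : v = c • (A⁻¹ *ᵥ v) := by
    rw [← mulVec_smul, ← h, mulVec_mulVec, nonsing_inv_mul _ hA, one_mulVec]
  rcases eq_or_ne c 0 with rfl | hc
  · obtain rfl : v = 0 := by simpa using hv
    simp
  · conv_rhs => rw [hv, smul_smul, inv_mul_cancel₀ hc, one_smul]

theorem LinearIsometryEquiv.integral_comp {E F G : Type*} [NormedAddCommGroup E]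
    [InnerProductSpace ℝ E] [FiniteDimensional ℝ E] [MeasurableSpace E] [BorelSpace E]
    [NormedAddCommGroup F] [InnerProductSpace ℝ F] [FiniteDimensional ℝ F] [MeasurableSpace F]
    [BorelSpace F] [NormedAddCommGroup G] [NormedSpace ℝ G] (T : E ≃ₗᵢ[ℝ] F) (g : F → G) :
    ∫ x, g (T x) = ∫ y, g y :=
  T.measurePreserving.integral_comp T.toHomeomorph.measurableEmbedding g

section EuclideanSpace

variable {ι : Type*} [Fintype ι]

lemma integral_euclideanSpace_prod (f : ι → ℝ → ℝ) :
    ∫ u : EuclideanSpace ℝ ι, ∏ i, f i (u i) = ∏ i, ∫ s, f i s := by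
  rw [← (PiLp.volume_preserving_toLp ι).integral_comp
    (MeasurableEquiv.toLp 2 (ι → ℝ)).measurableEmbedding]
  exact integral_fintype_prod_eq_prod f

lemma integral_integral_euclideanSpace_prod (F : ι → ℝ → ℝ → ℝ) :
    ∫ u : EuclideanSpace ℝ ι, ∫ v : EuclideanSpace ℝ ι, ∏ i, F i (u i) (v i)
      = ∏ i, ∫ s, ∫ t, F i s t := by
  simp_rw [integral_euclideanSpace_prod fun i ↦ F i _]
  exact integral_euclideanSpace_prod fun i s ↦ ∫ t, F i s t

end EuclideanSpace

lemma integral_exp_neg_mul_sq_add_mul_sq {p q : ℝ} (hp : 0 < p) (hq : 0 < q) (x y : ℝ) :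
    ∫ t, exp (-(p * (x - t) ^ 2 + q * (t - y) ^ 2))
      = √(π / (p + q)) * exp (-(p * q / (p + q) * (x - y) ^ 2)) := by
  have hsq : ∀ t, p * (x - t) ^ 2 + q * (t - y) ^ 2
      = (p + q) * (t - (p * x + q * y) / (p + q)) ^ 2 + p * q / (p + q) * (x - y) ^ 2 := by
    intro t
    field_simp
    ring
  simp_rw [hsq, neg_add, exp_add, ← neg_mul]
  rw [integral_mul_const, integral_sub_right_eq_self (fun t ↦ exp (-(p + q) * t ^ 2)),
    integral_gaussian]

lemma integral_integral_exp_neg_mul_sq {α β : ℝ} (hα : 0 < α) (hβ : 0 < β) (a b : ℝ) :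
    ∫ s, ∫ t, exp (-(α * (s - t) ^ 2 + β * (s - a) ^ 2 + β * (t - b) ^ 2))
      = π / √(β * (2 * α + β)) * exp (-(α * β / (2 * α + β) * (a - b) ^ 2)) := by
  have hr : 0 < α * β / (α + β) := by positivity
  have hinner : ∀ s, ∫ t, exp (-(α * (s - t) ^ 2 + β * (s - a) ^ 2 + β * (t - b) ^ 2))
      = √(π / (α + β)) * exp (-(β * (a - s) ^ 2 + α * β / (α + β) * (s - b) ^ 2)) := by
    intro s
    have hsplit : ∀ t, -(α * (s - t) ^ 2 + β * (s - a) ^ 2 + β * (t - b) ^ 2)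
        = -(β * (a - s) ^ 2) + -(α * (s - t) ^ 2 + β * (t - b) ^ 2) := fun t ↦ by ring
    simp_rw [hsplit, exp_add, integral_const_mul, integral_exp_neg_mul_sq_add_mul_sq hα hβ]
    rw [neg_add, exp_add]
    ring
  simp_rw [hinner, integral_const_mul, integral_exp_neg_mul_sq_add_mul_sq hβ hr]
  have hcoef : β * (α * β / (α + β)) / (β + α * β / (α + β)) = α * β / (2 * α + β) := by
    field_simp
    ring
  have hsqrt : √(π / (α + β)) * √(π / (β + α * β / (α + β))) = π / √(β * (2 * α + β)) := by
    rw [← sqrt_mul (by positivity), show π / (α + β) * (π / (β + α * β / (α + β)))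
      = π ^ 2 / (β * (2 * α + β)) by field_simp; ring, sqrt_div' _ (by positivity),
      sqrt_sq pi_pos.le]
  rw [hcoef, ← mul_assoc, hsqrt]

lemma integral_integral_rbf_mul_normal {σ : ℝ} (hσ : σ ≠ 0) {l : ℝ} (hl : 0 < l) (a b : ℝ) :
    ∫ s, ∫ t, exp (-(s - t) ^ 2 / (2 * σ ^ 2)) *
        ((2 * π * l) ^ (-(1 : ℝ) / 2) * exp (-(s - a) ^ 2 / (2 * l))) *
        ((2 * π * l) ^ (-(1 : ℝ) / 2) * exp (-(t - b) ^ 2 / (2 * l)))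
      = (2 * (1 / σ ^ 2) * l + 1) ^ (-(1 : ℝ) / 2) *
          exp (-(1 / (2 * σ ^ 2)) * ((2 * (1 / σ ^ 2) * l + 1)⁻¹ * (a - b) ^ 2)) := by
  set α := 1 / (2 * σ ^ 2)
  set β := 1 / (2 * l)
  have hα : 0 < α := by positivity
  have hβ : 0 < β := by positivity
  have hnorm : (2 * π * l) ^ (-(1 : ℝ) / 2) * (2 * π * l) ^ (-(1 : ℝ) / 2) = (2 * π * l)⁻¹ := by
    rw [← rpow_add (by positivity), show -(1 : ℝ) / 2 + -1 / 2 = -1 by norm_num, rpow_neg_one]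
  have hintegrand : ∀ s t, exp (-(s - t) ^ 2 / (2 * σ ^ 2)) *
        ((2 * π * l) ^ (-(1 : ℝ) / 2) * exp (-(s - a) ^ 2 / (2 * l))) *
        ((2 * π * l) ^ (-(1 : ℝ) / 2) * exp (-(t - b) ^ 2 / (2 * l)))
      = (2 * π * l)⁻¹ * exp (-(α * (s - t) ^ 2 + β * (s - a) ^ 2 + β * (t - b) ^ 2)) := by
    intro s t
    rw [← hnorm, neg_add, neg_add, exp_add, exp_add]
    simp only [α, β]
    ring_nf
  simp_rw [hintegrand, integral_const_mul, integral_integral_exp_neg_mul_sq hα hβ]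
  set m := 2 * (1 / σ ^ 2) * l + 1
  have hm : 0 < m := by positivity
  have hsq : β * (2 * α + β) = (√m / (2 * l)) ^ 2 := by
    rw [div_pow, sq_sqrt hm.le]
    simp only [α, β, m]
    field_simp
  have hcoef : α * β / (2 * α + β) = α * m⁻¹ := by
    simp only [α, β, m]
    field_simp
  rw [hsq, sqrt_sq (by positivity), hcoef, neg_div, rpow_neg hm.le, ← sqrt_eq_rpow]
  field_simp

lemma prod_const_mul_rpow {ι : Type*} [Fintype ι] {c : ℝ} (hc : 0 ≤ c) {L : ι → ℝ}
    (hL : ∀ i, 0 ≤ L i) (r : ℝ) :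
    ∏ i, (c * L i) ^ r = c ^ (Fintype.card ι * r) * (∏ i, L i) ^ r := by
  rw [Finset.prod_congr rfl fun i _ ↦ mul_rpow hc (hL i), Finset.prod_mul_distrib,
    Finset.prod_const, Finset.card_univ, ← Real.finsetProd_rpow _ _ fun i _ ↦ hL i,
    ← rpow_natCast, ← rpow_mul hc, mul_comm r]

lemma rbfKernel_map_linearIsometryEquiv {d : ℕ} (σ : ℝ)
    (T : EuclideanSpace ℝ (Fin d) ≃ₗᵢ[ℝ] EuclideanSpace ℝ (Fin d))
    (x y : EuclideanSpace ℝ (Fin d)) :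
    rbfKernel σ (T x) (T y) = rbfKernel σ x y := by
  rw [rbfKernel, rbfKernel, ← map_sub, LinearIsometryEquiv.norm_map]

lemma rbfKernel_eq_prod {d : ℕ} (σ : ℝ) (x y : EuclideanSpace ℝ (Fin d)) :
    rbfKernel σ x y = ∏ i, exp (-(x i - y i) ^ 2 / (2 * σ ^ 2)) := by
  simp_rw [rbfKernel, EuclideanSpace.real_norm_sq_eq, ← exp_sum, ← Finset.sum_div,
    ← Finset.sum_neg_distrib, PiLp.sub_apply]

section Eigencoordinates

variable {d : ℕ} {S : Matrix (Fin d) (Fin d) ℝ}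
  (b : OrthonormalBasis (Fin d) ℝ (EuclideanSpace ℝ (Fin d)))
  {L : Fin d → ℝ} (hb : ∀ i, S *ᵥ b i = L i • b i) (hL : ∀ i, 0 < L i)
include hb hL

lemma gaussianDensity_repr_symm (μ u : EuclideanSpace ℝ (Fin d)) :
    gaussianDensity μ S (b.repr.symm u)
      = ∏ i, ((2 * π * L i) ^ (-(1 : ℝ) / 2) * exp (-(u i - b.repr μ i) ^ 2 / (2 * L i))) := by
  have hdet : S.det = ∏ i, L i := det_eq_prod_of_mulVec_eq_smul b hb
  have hSinv : ∀ i, S⁻¹ *ᵥ b i = (L i)⁻¹ • b i := fun i ↦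
    inv_mulVec_eq_smul_of_mulVec_eq_smul (hdet ▸ Finset.prod_pos fun i _ ↦ hL i).ne'.isUnit (hb i)
  have hconst : (2 * π) ^ (-(d : ℝ) / 2) * S.det ^ (-(1 : ℝ) / 2)
      = ∏ i, (2 * π * L i) ^ (-(1 : ℝ) / 2) := by
    rw [hdet, prod_const_mul_rpow (by positivity) fun i ↦ (hL i).le, Fintype.card_fin]
    ring_nf
  rw [gaussianDensity, ← WithLp.ofLp_sub 2 (b.repr.symm u) μ,
    dotProduct_mulVec_eq_sum_of_mulVec_eq_smul b hSinv, hconst, Finset.mul_sum, exp_sum,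
    ← Finset.prod_mul_distrib]
  refine Finset.prod_congr rfl fun i _ ↦ ?_
  rw [map_sub, LinearIsometryEquiv.apply_symm_apply, PiLp.sub_apply]
  ring_nf

lemma integral_integral_rbfKernel_mul_gaussianDensity {σ : ℝ} (hσ : σ ≠ 0)
    (μ₁ μ₂ : EuclideanSpace ℝ (Fin d)) :
    ∫ x, ∫ y, rbfKernel σ x y * gaussianDensity μ₁ S x * gaussianDensity μ₂ S y
      = ((2 * (1 / σ ^ 2)) • S + 1).det ^ (-(1 : ℝ) / 2) *
        exp (-(1 / (2 * σ ^ 2)) *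
          ((μ₁ - μ₂) ⬝ᵥ (((2 * (1 / σ ^ 2)) • S + 1)⁻¹ *ᵥ (μ₁ - μ₂)))) := by
  set M := (2 * (1 / σ ^ 2)) • S + 1
  set m : Fin d → ℝ := fun i ↦ 2 * (1 / σ ^ 2) * L i + 1
  have hm : ∀ i, 0 < m i := fun i ↦ by have := hL i; positivity
  have hMb : ∀ i, M *ᵥ b i = m i • b i := fun i ↦ by
    simp only [M, m, add_mulVec, Matrix.smul_mulVec, hb, one_mulVec, smul_smul, add_smul,
      one_smul]
  have hMdet : M.det = ∏ i, m i := det_eq_prod_of_mulVec_eq_smul b hMb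
  have hMinv : ∀ i, M⁻¹ *ᵥ b i = (m i)⁻¹ • b i := fun i ↦
    inv_mulVec_eq_smul_of_mulVec_eq_smul (hMdet ▸ Finset.prod_pos fun i _ ↦ hm i).ne'.isUnit
      (hMb i)
  have hquad : (μ₁ - μ₂) ⬝ᵥ (M⁻¹ *ᵥ (μ₁ - μ₂))
      = ∑ i, (m i)⁻¹ * (b.repr μ₁ i - b.repr μ₂ i) ^ 2 := by
    rw [← WithLp.ofLp_sub 2 μ₁ μ₂, dotProduct_mulVec_eq_sum_of_mulVec_eq_smul b hMinv]
    simp only [map_sub, PiLp.sub_apply]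
  set F : Fin d → ℝ → ℝ → ℝ := fun i s t ↦ exp (-(s - t) ^ 2 / (2 * σ ^ 2)) *
    ((2 * π * L i) ^ (-(1 : ℝ) / 2) * exp (-(s - b.repr μ₁ i) ^ 2 / (2 * L i))) *
    ((2 * π * L i) ^ (-(1 : ℝ) / 2) * exp (-(t - b.repr μ₂ i) ^ 2 / (2 * L i)))
  calc ∫ x, ∫ y, rbfKernel σ x y * gaussianDensity μ₁ S x * gaussianDensity μ₂ S y
      = ∫ u, ∫ v, rbfKernel σ (b.repr.symm u) (b.repr.symm v) *
          gaussianDensity μ₁ S (b.repr.symm u) * gaussianDensity μ₂ S (b.repr.symm v) := by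
        rw [← b.repr.symm.integral_comp]
        congr 1
        funext u
        rw [← b.repr.symm.integral_comp]
    _ = ∫ u : EuclideanSpace ℝ (Fin d), ∫ v : EuclideanSpace ℝ (Fin d), ∏ i, F i (u i) (v i) := by
        simp_rw [rbfKernel_map_linearIsometryEquiv, rbfKernel_eq_prod,
          gaussianDensity_repr_symm b hb hL, ← Finset.prod_mul_distrib]
        rfl
    _ = ∏ i, ∫ s, ∫ t, F i s t := integral_integral_euclideanSpace_prod F
    _ = ∏ i, (m i) ^ (-(1 : ℝ) / 2) *
          exp (-(1 / (2 * σ ^ 2)) * ((m i)⁻¹ * (b.repr μ₁ i - b.repr μ₂ i) ^ 2)) :=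
        Finset.prod_congr rfl fun i _ ↦ integral_integral_rbf_mul_normal hσ (hL i) _ _
    _ = M.det ^ (-(1 : ℝ) / 2) * exp (-(1 / (2 * σ ^ 2)) * ((μ₁ - μ₂) ⬝ᵥ (M⁻¹ *ᵥ (μ₁ - μ₂)))) := by
        rw [Finset.prod_mul_distrib, ← exp_sum, hMdet, hquad, Finset.mul_sum,
          Real.finsetProd_rpow _ _ fun i _ ↦ (hm i).le]

end Eigencoordinates

theorem mmd_gaussian_mean_general (d : ℕ) (σ : ℝ) (hσ : 0 < σ)
    (μ μstar : EuclideanSpace ℝ (Fin d)) (S : Matrix (Fin d) (Fin d) ℝ) (hS : S.PosDef) :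
    mmd σ (gaussianDensity μ S) (gaussianDensity μstar S)
      = 2 / Real.sqrt (((2 * (1 / σ ^ 2)) • S + 1).det) *
        (1 - Real.exp (-(1 / (2 * σ ^ 2)) *
          ((μ - μstar) ⬝ᵥ (((2 * (1 / σ ^ 2)) • S + 1)⁻¹ *ᵥ (μ - μstar))))) := by
  have cross := integral_integral_rbfKernel_mul_gaussianDensity hS.1.eigenvectorBasis
    hS.1.mulVec_eigenvectorBasis hS.eigenvalues_pos hσ.ne'
  have hdet : 0 < ((2 * (1 / σ ^ 2)) • S + 1).det :=
    ((hS.smul (by positivity)).add_posSemidef PosSemidef.one).det_pos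
  rw [mmd, cross, cross, cross, sub_self, sub_self, neg_div, rpow_neg hdet.le, ← sqrt_eq_rpow]
  simp only [WithLp.ofLp_zero, zero_dotProduct, mul_zero, exp_zero]
  ring

theorem mmd_gaussian_mean (d : ℕ) (hd : 1 ≤ d) (σ : ℝ) (hσ : 0 < σ)
    (μ μstar : EuclideanSpace ℝ (Fin d)) (S : Matrix (Fin d) (Fin d) ℝ) (hS : S.PosDef) :
    mmd σ (gaussianDensity μ S) (gaussianDensity μstar S)
      = 2 / Real.sqrt (((2 * (1 / σ ^ 2)) • S + 1).det) *
        (1 - Real.exp (-(1 / (2 * σ ^ 2)) *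
          ((μ - μstar) ⬝ᵥ (((2 * (1 / σ ^ 2)) • S + 1)⁻¹ *ᵥ (μ - μstar))))) :=
  mmd_gaussian_mean_general d σ hσ μ μstar S hS
end

section
/- Let d ≥ 1, let σ > 0, let ε ≥ 0, and let a* ∈ ℝ^d. Define g : ℝ^d → ℝ by g(a) := det((1/σ²)(2aaᵀ + 2ε²I) + I)^{-1/2} + det((1/σ²)(2a*a*ᵀ + 2ε²I) + I)^{-1/2} − 2 det((1/σ²)(aaᵀ + a*a*ᵀ + 2ε²I) + I)^{-1/2}. Then g(a*) = g(−a*) = 0 and g(a) ≥ 0 for every a ∈ ℝ^d; in particular a* and −a* are global minimizers of g. -/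
open Matrix

private lemma det_rank_two' (d : ℕ) (u v : Fin d → ℝ) :
    ((1 : Matrix (Fin d) (Fin d) ℝ) + vecMulVec u u + vecMulVec v v).det
      = (1 + u ⬝ᵥ u) * (1 + v ⬝ᵥ v) - (u ⬝ᵥ v) ^ 2 := by
  set A : Matrix (Fin d) (Fin 2) ℝ := Matrix.of fun i j => if j = 0 then u i else v i with hA
  have h1 : (1 : Matrix (Fin d) (Fin d) ℝ) + vecMulVec u u + vecMulVec v v = 1 + A * Aᵀ := by
    ext i j
    simp [hA, Matrix.mul_apply, vecMulVec, Fin.sum_univ_two, Matrix.one_apply]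
    ring
  rw [h1, Matrix.det_one_add_mul_comm]
  have h2 : (Aᵀ * A : Matrix (Fin 2) (Fin 2) ℝ) =
      Matrix.of ![![u ⬝ᵥ u, u ⬝ᵥ v], ![v ⬝ᵥ u, v ⬝ᵥ v]] := by
    ext i j
    fin_cases i <;> fin_cases j <;>
      simp [hA, Matrix.mul_apply, dotProduct, mul_comm]
  rw [h2]
  rw [Matrix.det_fin_two]
  simp only [Matrix.add_apply, Matrix.one_apply, Matrix.of_apply]
  norm_num
  rw [dotProduct_comm v u]
  ring

private lemma det_scaled (d : ℕ) (t : ℝ) (ht : 0 ≤ t) (u v : Fin d → ℝ) :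
    (t • (vecMulVec u u + vecMulVec v v) + 1 : Matrix (Fin d) (Fin d) ℝ).det
      = (1 + t * (u ⬝ᵥ u)) * (1 + t * (v ⬝ᵥ v)) - t ^ 2 * (u ⬝ᵥ v) ^ 2 := by
  set r := Real.sqrt t with hrdef
  have hr : r * r = t := Real.mul_self_sqrt ht
  have h1 : (t • (vecMulVec u u + vecMulVec v v) + 1 : Matrix (Fin d) (Fin d) ℝ)
      = 1 + vecMulVec (r • u) (r • u) + vecMulVec (r • v) (r • v) := by
    ext i j
    simp only [Matrix.add_apply, Matrix.smul_apply, vecMulVec_apply, Pi.add_apply,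
      Pi.smul_apply, smul_eq_mul]
    rw [← hr]
    ring
  rw [h1, det_rank_two']
  have h2 : (r • u) ⬝ᵥ (r • u) = t * (u ⬝ᵥ u) := by
    rw [smul_dotProduct, dotProduct_smul, smul_eq_mul, smul_eq_mul, ← mul_assoc, hr]
  have h3 : (r • v) ⬝ᵥ (r • v) = t * (v ⬝ᵥ v) := by
    rw [smul_dotProduct, dotProduct_smul, smul_eq_mul, smul_eq_mul, ← mul_assoc, hr]
  have h4 : (r • u) ⬝ᵥ (r • v) = t * (u ⬝ᵥ v) := by
    rw [smul_dotProduct, dotProduct_smul, smul_eq_mul, smul_eq_mul, ← mul_assoc, hr]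
  rw [h2, h3, h4]
  ring

private lemma rpow_neg_half (z : ℝ) (hz : 0 < z) :
    z ^ (-(1:ℝ) / 2) = (Real.sqrt z)⁻¹ := by
  rw [neg_div, Real.rpow_neg hz.le, ← Real.sqrt_eq_rpow]

private lemma core_ineq (x y D : ℝ) (hx : 1 ≤ x) (hy : 1 ≤ y) (hD : (x + y) / 2 ≤ D) :
    2 * (Real.sqrt D)⁻¹ ≤ (Real.sqrt x)⁻¹ + (Real.sqrt y)⁻¹ := by
  have hx0 : (0:ℝ) < x := by linarith
  have hy0 : (0:ℝ) < y := by linarith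
  have hm0 : (0:ℝ) < (x + y) / 2 := by linarith
  have hD0 : (0:ℝ) < D := lt_of_lt_of_le hm0 hD
  set p := Real.sqrt x with hp
  set q := Real.sqrt y with hq
  set m := Real.sqrt ((x + y) / 2) with hmm
  have hp0 : 0 < p := Real.sqrt_pos.2 hx0
  have hq0 : 0 < q := Real.sqrt_pos.2 hy0
  have hm0' : 0 < m := Real.sqrt_pos.2 hm0
  have hsD : m ≤ Real.sqrt D := Real.sqrt_le_sqrt hD
  have hsD0 : 0 < Real.sqrt D := Real.sqrt_pos.2 hD0
  have step1 : 2 * (Real.sqrt D)⁻¹ ≤ 2 * m⁻¹ := by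
    have := inv_anti₀ hm0' hsD
    linarith
  refine step1.trans ?_
  have hp2 : p ^ 2 = x := Real.sq_sqrt hx0.le
  have hq2 : q ^ 2 = y := Real.sq_sqrt hy0.le
  have hm2 : m ^ 2 = (x + y) / 2 := Real.sq_sqrt hm0.le
  have key : 2 * (p * q) ≤ m * (p + q) := by
    have h2m : 2 * m ^ 2 = p ^ 2 + q ^ 2 := by rw [hp2, hq2, hm2]; ring
    nlinarith [sq_nonneg (p - q), sq_nonneg (p + q), sq_nonneg (m * (p + q) - 2 * p * q),
      mul_pos hp0 hq0, mul_pos hm0' (mul_pos hp0 hq0), sq_nonneg (p*q - m*p), sq_nonneg (p*q - m*q)]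
  rw [inv_add_inv hp0.ne' hq0.ne']
  rw [show (2:ℝ) * m⁻¹ = 2 / m from by ring]
  rw [div_le_div_iff₀ hm0' (mul_pos hp0 hq0)]
  nlinarith [key]

theorem mmd_covariance_global_minima (d : ℕ) (hd : 1 ≤ d) (σ : ℝ) (hσ : 0 < σ)
    (ε : ℝ) (hε : 0 ≤ ε) (astar : EuclideanSpace ℝ (Fin d))
    (g : EuclideanSpace ℝ (Fin d) → ℝ)
    (hg : g = fun a : EuclideanSpace ℝ (Fin d) =>
      (((1 / σ ^ 2) • ((2 : ℝ) • vecMulVec a a + (2 * ε ^ 2) • 1) + 1).det) ^ (-(1 : ℝ) / 2)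
      + (((1 / σ ^ 2) • ((2 : ℝ) • vecMulVec astar astar + (2 * ε ^ 2) • 1) + 1).det) ^ (-(1 : ℝ) / 2)
      - 2 * (((1 / σ ^ 2) • (vecMulVec a a + vecMulVec astar astar + (2 * ε ^ 2) • 1) + 1).det) ^ (-(1 : ℝ) / 2)) :
    g astar = 0 ∧ g (-astar) = 0 ∧ ∀ a : EuclideanSpace ℝ (Fin d), 0 ≤ g a := by
  subst hg
  have hσ2 : (0:ℝ) < σ ^ 2 := by positivity
  obtain ⟨c, hc⟩ : ∃ c : ℝ, c = 2 * ε ^ 2 / σ ^ 2 + 1 := ⟨_, rfl⟩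
  have hc0 : 0 < c := by rw [hc]; positivity
  obtain ⟨t, htdef⟩ : ∃ t : ℝ, t = 1 / (σ ^ 2 * c) := ⟨_, rfl⟩
  have ht0 : 0 < t := by rw [htdef]; positivity
  have hneg : vecMulVec (α := ℝ) (-astar : EuclideanSpace ℝ (Fin d)) (-astar) =
      vecMulVec (α := ℝ) astar astar := by
    ext i j
    simp [vecMulVec_apply]
  have htwo : ∀ x : EuclideanSpace ℝ (Fin d),
      (2 : ℝ) • vecMulVec (α := ℝ) x x = vecMulVec (α := ℝ) x x + vecMulVec (α := ℝ) x x :=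
    fun x => two_smul ℝ _
  have hfact : ∀ x y : EuclideanSpace ℝ (Fin d),
      ((1 / σ ^ 2) • (vecMulVec (α := ℝ) x x + vecMulVec (α := ℝ) y y + (2 * ε ^ 2) • 1) + 1
        : Matrix (Fin d) (Fin d) ℝ)
        = c • (t • (vecMulVec (α := ℝ) x x + vecMulVec (α := ℝ) y y) + 1) := by
    intro x y
    ext i j
    simp only [Matrix.add_apply, Matrix.smul_apply, Matrix.one_apply, vecMulVec_apply,
      Pi.add_apply, smul_eq_mul]
    by_cases h : i = j
    · simp only [h, if_true, ite_true]
      rw [htdef, hc]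
      have hcne : 2 * ε ^ 2 / σ ^ 2 + 1 ≠ 0 := by positivity
      field_simp
      ring
    · simp only [h, if_false, ite_false]
      rw [htdef, hc]
      have hcne : 2 * ε ^ 2 / σ ^ 2 + 1 ≠ 0 := by positivity
      field_simp
      ring
  have hdet : ∀ x y : EuclideanSpace ℝ (Fin d),
      (((1 / σ ^ 2) • (vecMulVec (α := ℝ) x x + vecMulVec (α := ℝ) y y + (2 * ε ^ 2) • 1) + 1
        : Matrix (Fin d) (Fin d) ℝ)).det
        = c ^ d * ((1 + t * (x ⬝ᵥ x)) * (1 + t * (y ⬝ᵥ y)) - t ^ 2 * ((x : Fin d → ℝ) ⬝ᵥ y) ^ 2) := by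
    intro x y
    rw [hfact, Matrix.det_smul, det_scaled d t ht0.le, Fintype.card_fin]
  refine ⟨?_, ?_, ?_⟩
  · simp only
    rw [htwo astar, hdet astar astar]
    ring
  · simp only
    rw [htwo (-astar), htwo astar, hneg, hdet astar astar]
    ring
  · intro a
    simp only
    rw [htwo a, htwo astar, hdet a a, hdet astar astar, hdet a astar]
    set A : ℝ := (a : Fin d → ℝ) ⬝ᵥ a with hA
    set B : ℝ := (astar : Fin d → ℝ) ⬝ᵥ astar with hB
    set γ : ℝ := (a : Fin d → ℝ) ⬝ᵥ astar with hγ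
    have hA0 : 0 ≤ A := Finset.sum_nonneg fun i _ => mul_self_nonneg _
    have hB0 : 0 ≤ B := Finset.sum_nonneg fun i _ => mul_self_nonneg _
    have hCS : γ ^ 2 ≤ A * B := by
      have h := Finset.sum_mul_sq_le_sq_mul_sq Finset.univ (a : Fin d → ℝ) (astar : Fin d → ℝ)
      simpa [hA, hB, hγ, dotProduct, sq] using h
    set α : ℝ := t * A with hα
    set β : ℝ := t * B with hβ
    have hα0 : 0 ≤ α := mul_nonneg ht0.le hA0
    have hβ0 : 0 ≤ β := mul_nonneg ht0.le hB0
    have he1 : (1 + t * A) * (1 + t * A) - t ^ 2 * A ^ 2 = 1 + 2 * α := by rw [hα]; ring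
    have he2 : (1 + t * B) * (1 + t * B) - t ^ 2 * B ^ 2 = 1 + 2 * β := by rw [hβ]; ring
    rw [he1, he2]
    set D : ℝ := (1 + t * A) * (1 + t * B) - t ^ 2 * γ ^ 2 with hD
    have htγ : t ^ 2 * γ ^ 2 ≤ α * β := by
      have := mul_le_mul_of_nonneg_left hCS (sq_nonneg t)
      calc t ^ 2 * γ ^ 2 ≤ t ^ 2 * (A * B) := this
        _ = α * β := by rw [hα, hβ]; ring
    have hDge : ((1 + 2 * α) + (1 + 2 * β)) / 2 ≤ D := by
      rw [hD, hα, hβ] at *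
      nlinarith [htγ]
    have hx1 : (1:ℝ) ≤ 1 + 2 * α := by linarith
    have hy1 : (1:ℝ) ≤ 1 + 2 * β := by linarith
    have hx0 : (0:ℝ) < 1 + 2 * α := by linarith
    have hy0 : (0:ℝ) < 1 + 2 * β := by linarith
    have hD0 : (0:ℝ) < D := by
      have : (1:ℝ) ≤ ((1 + 2 * α) + (1 + 2 * β)) / 2 := by linarith
      linarith
    have hcd : (0:ℝ) < c ^ d := pow_pos hc0 d
    have key : ∀ z : ℝ, 0 < z →
        (c ^ d * z) ^ (-(1:ℝ) / 2) = (Real.sqrt (c ^ d))⁻¹ * (Real.sqrt z)⁻¹ := by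
      intro z hz
      rw [rpow_neg_half _ (mul_pos hcd hz), Real.sqrt_mul hcd.le, mul_inv]
    rw [key _ hx0, key _ hy0, key _ hD0]
    have hK0 : 0 ≤ (Real.sqrt (c ^ d))⁻¹ := by positivity
    have hcore := core_ineq (1 + 2 * α) (1 + 2 * β) D hx1 hy1 hDge
    have hfin := mul_le_mul_of_nonneg_left hcore hK0
    ring_nf at hfin ⊢
    linarith [hfin]
end

section
/- Let d ≥ 1, let σ > 0, let ε ≥ 0, and let a* ∈ ℝ^d with ‖a*‖ = 1. Define g : ℝ^d → ℝ by g(a) := det((1/σ²)(2aaᵀ + 2ε²I) + I)^{-1/2} + det((1/σ²)(2a*a*ᵀ + 2ε²I) + I)^{-1/2} − 2 det((1/σ²)(aaᵀ + a*a*ᵀ + 2ε²I) + I)^{-1/2}. Then g is differentiable and its gradient is ∇g(a) = −2 det((2/σ²)(aaᵀ + ε²I) + I)^{-3/2} (1/σ²)^d (2ε² + σ²)^{d−1} a + 2 det((1/σ²)(aaᵀ + a*a*ᵀ + 2ε²I) + I)^{-3/2} (1/σ²)^d (1 + 2ε² + σ²)(2ε² + σ²)^{d−1} (a*a*ᵀ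 + (2ε² + σ²)I)⁻¹ a. -/
/-!
By the matrix determinant lemma, `det (N + c • a aᵀ) = det N * (1 + c * aᵀ N⁻¹ a)`, so for
symmetric invertible `N` the gradient of `a ↦ det (N + c • a aᵀ)` is `2 c det N • N⁻¹ a`, and the
chain rule turns this into `-(c det N) det (N + c • a aᵀ) ^ (-3/2) • N⁻¹ a` for
`det (N + c • a aᵀ) ^ (-1/2)`. Both `a`-dependent terms of `g` have this shape: with
`N = (2ε² + σ²)/σ² • I`, `c = 2/σ²`, and with `N = (a* a*ᵀ + (2ε² + σ²) I)/σ²`, `c = 1/σ²`, where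
`‖a*‖ = 1` gives `det N = σ^(-2d) (2ε² + σ²)^(d-1) (1 + 2ε² + σ²)`.
-/

open Matrix

section Gradient

variable {F : Type*} [NormedAddCommGroup F] [InnerProductSpace ℝ F] [CompleteSpace F]
  {f f₁ : F → ℝ} {v w x : F}

theorem HasGradientAt.add (hf : HasGradientAt f v x) (hf₁ : HasGradientAt f₁ w x) :
    HasGradientAt (fun y => f y + f₁ y) (v + w) x := by
  rw [hasGradientAt_iff_hasFDerivAt] at *
  rw [map_add]
  exact hf.add hf₁

theorem HasGradientAt.sub (hf : HasGradientAt f v x) (hf₁ : HasGradientAt f₁ w x) :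
    HasGradientAt (fun y => f y - f₁ y) (v - w) x := by
  rw [hasGradientAt_iff_hasFDerivAt] at *
  rw [map_sub]
  exact hf.sub hf₁

theorem HasDerivAt.comp_hasGradientAt (x : F) {h : ℝ → ℝ} {h' : ℝ} (hh : HasDerivAt h h' (f x))
    (hf : HasGradientAt f v x) : HasGradientAt (fun y => h (f y)) (h' • v) x := by
  rw [hasGradientAt_iff_hasFDerivAt] at *
  rw [map_smul]
  exact hh.comp_hasFDerivAt x hf

theorem HasGradientAt.const_mul (k : ℝ) (hf : HasGradientAt f v x) :
    HasGradientAt (fun y => k * f y) (k • v) x := by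
  simpa using ((hasDerivAt_id (f x)).const_mul k).comp_hasGradientAt x hf

theorem HasGradientAt.const_add (k : ℝ) (hf : HasGradientAt f v x) :
    HasGradientAt (fun y => k + f y) v x := by
  simpa using ((hasDerivAt_id (f x)).const_add k).comp_hasGradientAt x hf

theorem LinearMap.IsSymmetric.hasGradientAt_inner_apply_self {T : F →L[ℝ] F}
    (hT : (T : F →ₗ[ℝ] F).IsSymmetric) (x : F) :
    HasGradientAt (fun y => inner ℝ (T y) y) ((2 : ℝ) • T x) x := by
  have hdual : InnerProductSpace.toDual ℝ F ((2 : ℝ) • T x) = 2 • innerSL ℝ (T x) := by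
    ext y
    simp [two_smul, InnerProductSpace.toDual_apply_apply]
  rw [hasGradientAt_iff_hasFDerivAt, hdual]
  exact (hT.hasStrictFDerivAt_reApplyInnerSelf x).hasFDerivAt

end Gradient

theorem EuclideanSpace.dotProduct_self_eq_norm_sq {ι : Type*} [Fintype ι] (x : EuclideanSpace ℝ ι) :
    x ⬝ᵥ x = ‖x‖ ^ 2 := by
  rw [← real_inner_self_eq_norm_sq, EuclideanSpace.inner_eq_star_dotProduct, star_trivial]

namespace Matrix

variable {n : Type*} [Fintype n] [DecidableEq n]

theorem det_add_vecMulVec {R : Type*} [CommRing R] {N : Matrix n n R} (hN : IsUnit N.det)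
    (u v : n → R) : (N + vecMulVec u v).det = N.det * (1 + v ⬝ᵥ N⁻¹ *ᵥ u) := by
  rw [vecMulVec_eq Unit, det_add_replicateCol_mul_replicateRow hN, ← replicateRow_vecMul,
    replicateRow_mul_replicateCol, det_unique (n := Unit), dotProduct_mulVec]
  rfl

section Field

variable {K : Type*} [Field K]

theorem inv_smul_of_ne_zero {k : K} (hk : k ≠ 0) {A : Matrix n n K} (hA : IsUnit A.det) :
    (k • A)⁻¹ = k⁻¹ • A⁻¹ :=
  inv_eq_left_inv (by simp [smul_smul, hk, nonsing_inv_mul _ hA])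

theorem det_vecMulVec_add_smul_one [Nonempty n] {t : K} (ht : t ≠ 0) (u v : n → K) :
    (vecMulVec u v + t • (1 : Matrix n n K)).det = t ^ (Fintype.card n - 1) * (t + v ⬝ᵥ u) := by
  obtain ⟨k, hk⟩ : ∃ k, Fintype.card n = k + 1 := Nat.exists_eq_add_one.mpr Fintype.card_pos
  rw [add_comm, det_add_vecMulVec (by simp [ht]), det_smul, det_one,
    inv_smul_of_ne_zero ht (by simp), inv_one, smul_mulVec, one_mulVec, dotProduct_smul,
    smul_eq_mul, hk, Nat.add_sub_cancel]
  field_simp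
  ring

end Field

theorem posDef_vecMulVec_self_add_smul_one {t : ℝ} (ht : 0 < t) (u : n → ℝ) :
    (vecMulVec u u + t • (1 : Matrix n n ℝ)).PosDef :=
  PosDef.posSemidef_add (by simpa using posSemidef_vecMulVec_self_star u) (PosDef.one.smul ht)

omit [DecidableEq n] in
theorem PosDef.add_smul_vecMulVec_self {N : Matrix n n ℝ} (hN : N.PosDef) {c : ℝ} (hc : 0 ≤ c)
    (u : n → ℝ) : (N + c • vecMulVec u u).PosDef :=
  hN.add_posSemidef ((posSemidef_vecMulVec_self_star u).smul hc)

theorem IsHermitian.hasGradientAt_dotProduct_mulVec_self {B : Matrix n n ℝ} (hB : B.IsHermitian)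
    (a : EuclideanSpace ℝ n) :
    HasGradientAt (fun x : EuclideanSpace ℝ n => x ⬝ᵥ B *ᵥ x)
      ((2 : ℝ) • WithLp.toLp 2 (B *ᵥ a)) a := by
  have hT : (toEuclideanCLM (𝕜 := ℝ) B : EuclideanSpace ℝ n →ₗ[ℝ] EuclideanSpace ℝ n).IsSymmetric :=
    isSymmetric_toEuclideanLin_iff.mpr hB
  convert hT.hasGradientAt_inner_apply_self a using 1
  · funext x
    rw [real_inner_comm, inner_toEuclideanCLM]
  · rfl

theorem hasGradientAt_det_add_smul_vecMulVec_self {N : Matrix n n ℝ} (hN : N.IsHermitian)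
    (hdet : IsUnit N.det) (c : ℝ) (a : EuclideanSpace ℝ n) :
    HasGradientAt (fun x : EuclideanSpace ℝ n => (N + c • vecMulVec x x).det)
      ((2 * c * N.det) • WithLp.toLp 2 (N⁻¹ *ᵥ a)) a := by
  convert (((hN.inv.hasGradientAt_dotProduct_mulVec_self a).const_mul c).const_add 1).const_mul
    N.det using 1
  · funext x
    rw [← vecMulVec_smul, det_add_vecMulVec hdet, smul_dotProduct, smul_eq_mul]
  · module

theorem PosDef.hasGradientAt_det_add_smul_vecMulVec_self_rpow_neg_half {N : Matrix n n ℝ}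
    (hN : N.PosDef) {c : ℝ} (hc : 0 ≤ c) (a : EuclideanSpace ℝ n) :
    HasGradientAt (fun x : EuclideanSpace ℝ n => (N + c • vecMulVec x x).det ^ (-(1 : ℝ) / 2))
      ((-(c * N.det) * (N + c • vecMulVec a a).det ^ (-(3 : ℝ) / 2)) •
        WithLp.toLp 2 (N⁻¹ *ᵥ a)) a := by
  have hpos := (hN.add_smul_vecMulVec_self hc a).det_pos
  have hD := hasGradientAt_det_add_smul_vecMulVec_self hN.isHermitian
    ((isUnit_iff_isUnit_det N).mp hN.isUnit) c a
  convert (Real.hasDerivAt_rpow_const (p := -(1 : ℝ) / 2) (Or.inl hpos.ne')).comp_hasGradientAt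
    a hD using 1
  rw [smul_smul]
  congr 1
  norm_num
  ring

theorem hasGradientAt_det_smul_one_add_smul_vecMulVec_self_rpow_neg_half [Nonempty n] {t : ℝ}
    (ht : 0 < t) {c : ℝ} (hc : 0 ≤ c) (a : EuclideanSpace ℝ n) :
    HasGradientAt
      (fun x : EuclideanSpace ℝ n =>
        (t • (1 : Matrix n n ℝ) + c • vecMulVec x x).det ^ (-(1 : ℝ) / 2))
      ((-(c * t ^ (Fintype.card n - 1)) *
        (t • (1 : Matrix n n ℝ) + c • vecMulVec a a).det ^ (-(3 : ℝ) / 2)) • a) a := by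
  convert (PosDef.one.smul ht).hasGradientAt_det_add_smul_vecMulVec_self_rpow_neg_half hc a using 1
  obtain ⟨k, hk⟩ : ∃ k, Fintype.card n = k + 1 := Nat.exists_eq_add_one.mpr Fintype.card_pos
  rw [det_smul, det_one, inv_smul_of_ne_zero ht.ne' (by simp), inv_one, smul_mulVec, one_mulVec,
    WithLp.toLp_smul, smul_smul, hk, Nat.add_sub_cancel]
  congr 1
  field_simp
  ring

theorem PosDef.hasGradientAt_det_smul_add_smul_vecMulVec_self_rpow_neg_half {B : Matrix n n ℝ}
    (hB : B.PosDef) {s : ℝ} (hs : 0 < s) (a : EuclideanSpace ℝ n) :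
    HasGradientAt
      (fun x : EuclideanSpace ℝ n => (s • B + s • vecMulVec x x).det ^ (-(1 : ℝ) / 2))
      ((-(s ^ Fintype.card n * B.det) * (s • B + s • vecMulVec a a).det ^ (-(3 : ℝ) / 2)) •
        WithLp.toLp 2 (B⁻¹ *ᵥ a)) a := by
  convert (hB.smul hs).hasGradientAt_det_add_smul_vecMulVec_self_rpow_neg_half hs.le a using 1
  rw [det_smul, inv_smul_of_ne_zero hs.ne' hB.det_pos.ne'.isUnit, smul_mulVec, WithLp.toLp_smul,
    smul_smul]
  congr 1
  field_simp

end Matrix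

theorem mmd_covariance_gradient_general (d : ℕ) (hd : 1 ≤ d) (σ : ℝ) (hσ : 0 < σ)
    (ε : ℝ) (astar : EuclideanSpace ℝ (Fin d)) (hastar : ‖astar‖ = 1)
    (g : EuclideanSpace ℝ (Fin d) → ℝ)
    (hg : g = fun a : EuclideanSpace ℝ (Fin d) =>
      (((1 / σ ^ 2) • ((2 : ℝ) • vecMulVec a a + (2 * ε ^ 2) • 1) + 1).det) ^ (-(1 : ℝ) / 2)
      + (((1 / σ ^ 2) • ((2 : ℝ) • vecMulVec astar astar + (2 * ε ^ 2) • 1) + 1).det) ^ (-(1 : ℝ) / 2)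
      - 2 * (((1 / σ ^ 2) • (vecMulVec a a + vecMulVec astar astar + (2 * ε ^ 2) • 1) + 1).det) ^ (-(1 : ℝ) / 2)) :
    Differentiable ℝ g ∧
    ∀ a : EuclideanSpace ℝ (Fin d),
      gradient g a
        = (-2 * (((2 / σ ^ 2) • (vecMulVec a a + ε ^ 2 • 1) + 1).det) ^ (-(3 : ℝ) / 2) *
            (1 / σ ^ 2) ^ d * (2 * ε ^ 2 + σ ^ 2) ^ (d - 1)) • a
          + (2 * (((1 / σ ^ 2) • (vecMulVec a a + vecMulVec astar astar + (2 * ε ^ 2) • 1) + 1).det) ^ (-(3 : ℝ) / 2) *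
            (1 / σ ^ 2) ^ d * (1 + 2 * ε ^ 2 + σ ^ 2) * (2 * ε ^ 2 + σ ^ 2) ^ (d - 1)) •
            ((WithLp.equiv 2 (Fin d → ℝ)).symm ((vecMulVec astar astar + (2 * ε ^ 2 + σ ^ 2) • (1 : Matrix (Fin d) (Fin d) ℝ))⁻¹ *ᵥ a)) := by
  obtain ⟨m, rfl⟩ : ∃ m, d = m + 1 := ⟨d - 1, by omega⟩
  set s : ℝ := 1 / σ ^ 2 with hs_def
  set S : ℝ := 2 * ε ^ 2 + σ ^ 2 with hS_def
  set A : Matrix (Fin (m + 1)) (Fin (m + 1)) ℝ := vecMulVec astar astar + S • 1 with hA_def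
  have hs : 0 < s := by positivity
  have hS : 0 < S := by positivity
  have hsS : s * S = 2 * ε ^ 2 / σ ^ 2 + 1 := by rw [hs_def, hS_def]; field_simp
  have hA : A.PosDef := posDef_vecMulVec_self_add_smul_one hS astar
  have hdetA : A.det = S ^ m * (S + 1) := by
    rw [hA_def, det_vecMulVec_add_smul_one hS.ne', EuclideanSpace.dotProduct_self_eq_norm_sq,
      hastar, Fintype.card_fin, Nat.add_sub_cancel, one_pow]
  have hM1 (x : EuclideanSpace ℝ (Fin (m + 1))) :
      s • ((2 : ℝ) • vecMulVec x x + (2 * ε ^ 2) • 1) + 1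
        = (s * S) • (1 : Matrix (Fin (m + 1)) (Fin (m + 1)) ℝ) + (2 * s) • vecMulVec x x := by
    rw [hsS]; module
  have hM2 (x : EuclideanSpace ℝ (Fin (m + 1))) :
      (2 / σ ^ 2) • (vecMulVec x x + ε ^ 2 • 1) + 1
        = (s * S) • (1 : Matrix (Fin (m + 1)) (Fin (m + 1)) ℝ) + (2 * s) • vecMulVec x x := by
    rw [hsS]; module
  have hM3 (x : EuclideanSpace ℝ (Fin (m + 1))) :
      s • (vecMulVec x x + vecMulVec astar astar + (2 * ε ^ 2) • 1) + 1
        = s • A + s • vecMulVec x x := by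
    simp only [hA_def, smul_add, smul_smul, hsS]; module
  set C := (s • ((2 : ℝ) • vecMulVec astar astar + (2 * ε ^ 2) • 1) + 1).det ^ (-(1 : ℝ) / 2)
  have key a := ((hasGradientAt_det_smul_one_add_smul_vecMulVec_self_rpow_neg_half (mul_pos hs hS)
    (by positivity : (0 : ℝ) ≤ 2 * s) a).add (hasGradientAt_const a C)).sub
    ((hA.hasGradientAt_det_smul_add_smul_vecMulVec_self_rpow_neg_half hs a).const_mul 2)
  simp only [hM1, hM3] at hg
  subst hg
  refine ⟨fun a => (key a).differentiableAt, fun a => (key a).gradient.trans ?_⟩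
  rw [hM2, hM3, hdetA, Fintype.card_fin, Nat.add_sub_cancel, WithLp.equiv_symm_apply, mul_pow]
  match_scalars <;> ring

theorem mmd_covariance_gradient (d : ℕ) (hd : 1 ≤ d) (σ : ℝ) (hσ : 0 < σ)
    (ε : ℝ) (hε : 0 ≤ ε) (astar : EuclideanSpace ℝ (Fin d)) (hastar : ‖astar‖ = 1)
    (g : EuclideanSpace ℝ (Fin d) → ℝ)
    (hg : g = fun a : EuclideanSpace ℝ (Fin d) =>
      (((1 / σ ^ 2) • ((2 : ℝ) • vecMulVec a a + (2 * ε ^ 2) • 1) + 1).det) ^ (-(1 : ℝ) / 2)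
      + (((1 / σ ^ 2) • ((2 : ℝ) • vecMulVec astar astar + (2 * ε ^ 2) • 1) + 1).det) ^ (-(1 : ℝ) / 2)
      - 2 * (((1 / σ ^ 2) • (vecMulVec a a + vecMulVec astar astar + (2 * ε ^ 2) • 1) + 1).det) ^ (-(1 : ℝ) / 2)) :
    Differentiable ℝ g ∧
    ∀ a : EuclideanSpace ℝ (Fin d),
      gradient g a
        = (-2 * (((2 / σ ^ 2) • (vecMulVec a a + ε ^ 2 • 1) + 1).det) ^ (-(3 : ℝ) / 2) *
            (1 / σ ^ 2) ^ d * (2 * ε ^ 2 + σ ^ 2) ^ (d - 1)) • a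
          + (2 * (((1 / σ ^ 2) • (vecMulVec a a + vecMulVec astar astar + (2 * ε ^ 2) • 1) + 1).det) ^ (-(3 : ℝ) / 2) *
            (1 / σ ^ 2) ^ d * (1 + 2 * ε ^ 2 + σ ^ 2) * (2 * ε ^ 2 + σ ^ 2) ^ (d - 1)) •
            ((WithLp.equiv 2 (Fin d → ℝ)).symm ((vecMulVec astar astar + (2 * ε ^ 2 + σ ^ 2) • (1 : Matrix (Fin d) (Fin d) ℝ))⁻¹ *ᵥ a)) :=
  mmd_covariance_gradient_general d hd σ hσ ε astar hastar g hg
end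

section
/- Let d ≥ 1, let σ > 0, let ε ≥ 0, and let a* ∈ ℝ^d with a* ≠ 0. Define g : ℝ^d → ℝ by g(a) := det((1/σ²)(2aaᵀ + 2ε²I) + I)^{-1/2} + det((1/σ²)(2a*a*ᵀ + 2ε²I) + I)^{-1/2} − 2 det((1/σ²)(aaᵀ + a*a*ᵀ + 2ε²I) + I)^{-1/2}. Then a = 0 is a critical point of g (∇g(0) = 0) and a local maximum of g. -/
/-!
With `β = 1 / (σ² + 2ε²)`, every determinant in `g` has the form
`(1 + 2ε²/σ²) ^ d * det (1 + β (u uᵀ + v vᵀ))`,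
and `det (1 + A B) = det (1 + B A)` turns the latter into a `2 × 2` determinant of inner products.
So `g` is a positive constant times `mmdProfile (β‖a‖²) (β‖a*‖²) (β⟪a, a*⟫)²`. Dropping the
Cauchy–Schwarz-bounded term `(β⟪a, a*⟫)²` only increases the profile, and with
`γ = (1 + β‖a*‖²)^(-1/2) < 1` the remaining function `x ↦ (1 + 2x)^(-1/2) - 2γ (1 + x)^(-1/2)` has
slope `γ - 1 < 0` at `0`; it stays below its value at `0` as long as `γ (1 + x) ≤ 1`. Hence `0` is a
local maximum of `g`, and the gradient vanishes there.
-/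

open Matrix
open Real RealInnerProductSpace Topology

namespace Matrix

variable {ι R K : Type*} [DecidableEq ι] [CommRing R] [Field K]

theorem smul_add_smul_one_add_one {p q : K} (h : 1 + p * q ≠ 0) (M : Matrix ι ι K) :
    p • (M + q • 1) + 1 = (1 + p * q) • (1 + (p / (1 + p * q)) • M) := by
  rw [smul_add (1 + p * q), smul_smul, mul_div_cancel₀ _ h]
  module

variable [Fintype ι]

theorem det_one_add_smul_vecMulVec_add_vecMulVec (r : R) (u v : ι → R) :
    (1 + r • (vecMulVec u u + vecMulVec v v)).det
      = (1 + r * (u ⬝ᵥ u)) * (1 + r * (v ⬝ᵥ v)) - (r * (u ⬝ᵥ v)) ^ 2 := by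
  set M : Matrix (Fin 2) ι R := of ![u, v]
  have hM : Mᵀ * (r • M) = r • (vecMulVec u u + vecMulVec v v) := by
    ext i j
    simp only [M, mul_apply, Fin.sum_univ_two, transpose_apply, of_apply, Matrix.smul_apply,
      Matrix.add_apply, vecMulVec_apply, smul_eq_mul, cons_val_zero, cons_val_one, cons_val_fin_one]
    ring
  have hGram : M * Mᵀ = !![u ⬝ᵥ u, u ⬝ᵥ v; v ⬝ᵥ u, v ⬝ᵥ v] := by
    ext i j
    fin_cases i <;> fin_cases j <;> rfl
  rw [← hM, det_one_add_mul_comm, smul_mul, hGram, det_fin_two, dotProduct_comm v u]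
  simp only [Matrix.add_apply, Matrix.smul_apply, one_apply_eq, one_apply_ne zero_ne_one,
    one_apply_ne one_ne_zero, of_apply, cons_val', cons_val_zero, cons_val_one, cons_val_fin_one,
    smul_eq_mul]
  ring

theorem det_smul_vecMulVec_add_vecMulVec_add_smul_one_add_one {p q : K} (h : 1 + p * q ≠ 0)
    (u v : ι → K) :
    (p • (vecMulVec u u + vecMulVec v v + q • 1) + 1).det
      = (1 + p * q) ^ Fintype.card ι * ((1 + p / (1 + p * q) * (u ⬝ᵥ u)) *
          (1 + p / (1 + p * q) * (v ⬝ᵥ v)) - (p / (1 + p * q) * (u ⬝ᵥ v)) ^ 2) := by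
  rw [smul_add_smul_one_add_one h, det_smul, det_one_add_smul_vecMulVec_add_vecMulVec]

end Matrix

theorem EuclideanSpace.ofLp_dotProduct_ofLp {ι : Type*} [Fintype ι] (u v : EuclideanSpace ℝ ι) :
    WithLp.ofLp u ⬝ᵥ WithLp.ofLp v = ⟪u, v⟫ := by
  rw [EuclideanSpace.inner_eq_star_dotProduct, star_trivial, dotProduct_comm]

theorem sq_mul_inner_le_mul {F : Type*} [NormedAddCommGroup F] [InnerProductSpace ℝ F]
    (β : ℝ) (u v : F) : (β * ⟪u, v⟫) ^ 2 ≤ β * ‖u‖ ^ 2 * (β * ‖v‖ ^ 2) := by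
  have h := real_inner_mul_inner_self_le u v
  rw [real_inner_self_eq_norm_sq, real_inner_self_eq_norm_sq] at h
  nlinarith [sq_nonneg β]

theorem inv_sqrt_one_add_two_mul_sub_le {x γ : ℝ} (hx : 0 ≤ x) (hγ : 0 ≤ γ)
    (h : γ * (1 + x) ≤ 1) :
    (√(1 + 2 * x))⁻¹ - 2 * γ * (√(1 + x))⁻¹ ≤ 1 - 2 * γ := by
  set u := √(1 + 2 * x)
  set v := √(1 + x)
  have hu2 : u ^ 2 = 1 + 2 * x := sq_sqrt (by linarith)
  have hv2 : v ^ 2 = 1 + x := sq_sqrt (by linarith)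
  have hu1 : 1 ≤ u := one_le_sqrt.mpr (by linarith)
  have hv1 : 1 ≤ v := one_le_sqrt.mpr (by linarith)
  have huv : u ≤ v ^ 2 := by nlinarith
  have hγuv : γ * (u * (u + 1)) ≤ v * (v + 1) :=
    calc γ * (u * (u + 1)) ≤ γ * ((1 + x) * (v ^ 2 + 1)) := by gcongr; linarith
      _ ≤ v ^ 2 + 1 := by nlinarith
      _ ≤ v * (v + 1) := by nlinarith
  -- multiplying by `(u + 1) (v + 1)` turns `u - 1` and `v - 1` into `2x` and `x`
  have key : 2 * γ * u * (v - 1) ≤ v * (u - 1) := by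
    refine le_of_mul_le_mul_right ?_ (by positivity : 0 < (u + 1) * (v + 1))
    calc 2 * γ * u * (v - 1) * ((u + 1) * (v + 1)) = 2 * x * (γ * (u * (u + 1))) := by
          linear_combination 2 * γ * u * (u + 1) * hv2
      _ ≤ 2 * x * (v * (v + 1)) := by gcongr
      _ = v * (u - 1) * ((u + 1) * (v + 1)) := by linear_combination -v * (v + 1) * hu2
  have hdiff : u⁻¹ - 2 * γ * v⁻¹ - (1 - 2 * γ) =
      (2 * γ * u * (v - 1) - v * (u - 1)) / (u * v) := by
    field_simp
    ring
  have := div_nonpos_of_nonpos_of_nonneg (sub_nonpos.mpr key) (by positivity : 0 ≤ u * v)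
  linarith

noncomputable def mmdProfile (x y q : ℝ) : ℝ :=
  (√(1 + 2 * x))⁻¹ + (√(1 + 2 * y))⁻¹ - 2 * (√((1 + x) * (1 + y) - q))⁻¹

theorem mmdProfile_le_mmdProfile_zero {x y q : ℝ} (hx : 0 ≤ x) (hq : 0 ≤ q) (hqxy : q ≤ x * y)
    (hxy : (1 + x) ^ 2 ≤ 1 + y) : mmdProfile x y q ≤ mmdProfile 0 y 0 := by
  have hy : 0 ≤ y := by nlinarith
  set γ := (√(1 + y))⁻¹
  have hγ : γ * (1 + x) ≤ 1 := by
    rw [inv_mul_le_one₀ (by positivity)]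
    exact le_sqrt_of_sq_le hxy
  have hmix : (√(1 + x))⁻¹ * γ ≤ (√((1 + x) * (1 + y) - q))⁻¹ := by
    rw [← mul_inv, ← sqrt_mul (by linarith)]
    exact inv_anti₀ (sqrt_pos.mpr (by nlinarith)) (sqrt_le_sqrt (by linarith))
  have hcore := inv_sqrt_one_add_two_mul_sub_le hx (by positivity) hγ
  simp only [mmdProfile, mul_zero, add_zero, one_mul, sub_zero, sqrt_one, inv_one]
  nlinarith

section ClosedForm

variable {ι : Type*} [Fintype ι] [DecidableEq ι] {p q : ℝ}

theorem rpow_neg_half_det_smul_vecMulVec_add_vecMulVec_add_smul_one_add_one (hp : 0 ≤ p)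
    (hq : 0 ≤ q) (u v : EuclideanSpace ℝ ι) :
    (p • (vecMulVec u u + vecMulVec v v + q • 1) + 1).det ^ (-(1 : ℝ) / 2)
      = (√((1 + p * q) ^ Fintype.card ι))⁻¹ * (√((1 + p / (1 + p * q) * ‖u‖ ^ 2) *
          (1 + p / (1 + p * q) * ‖v‖ ^ 2) - (p / (1 + p * q) * ⟪u, v⟫) ^ 2))⁻¹ := by
  set β := p / (1 + p * q)
  have hβ : 0 ≤ β := by positivity
  have hY : 0 ≤ (1 + β * ‖u‖ ^ 2) * (1 + β * ‖v‖ ^ 2) - (β * ⟪u, v⟫) ^ 2 := by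
    nlinarith [sq_mul_inner_le_mul β u v, mul_nonneg hβ (sq_nonneg ‖u‖),
      mul_nonneg hβ (sq_nonneg ‖v‖)]
  rw [det_smul_vecMulVec_add_vecMulVec_add_smul_one_add_one (by positivity),
    EuclideanSpace.ofLp_dotProduct_ofLp, EuclideanSpace.ofLp_dotProduct_ofLp,
    EuclideanSpace.ofLp_dotProduct_ofLp, real_inner_self_eq_norm_sq, real_inner_self_eq_norm_sq,
    neg_div, rpow_neg (by positivity), ← sqrt_eq_rpow, sqrt_mul (by positivity), mul_inv]

theorem closedForm_eq_mul_mmdProfile (hp : 0 ≤ p) (hq : 0 ≤ q) (a b : EuclideanSpace ℝ ι) :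
    (p • ((2 : ℝ) • vecMulVec a a + q • 1) + 1).det ^ (-(1 : ℝ) / 2)
      + (p • ((2 : ℝ) • vecMulVec b b + q • 1) + 1).det ^ (-(1 : ℝ) / 2)
      - 2 * (p • (vecMulVec a a + vecMulVec b b + q • 1) + 1).det ^ (-(1 : ℝ) / 2)
      = (√((1 + p * q) ^ Fintype.card ι))⁻¹ * mmdProfile (p / (1 + p * q) * ‖a‖ ^ 2)
          (p / (1 + p * q) * ‖b‖ ^ 2) ((p / (1 + p * q) * ⟪a, b⟫) ^ 2) := by
  simp only [two_smul, rpow_neg_half_det_smul_vecMulVec_add_vecMulVec_add_smul_one_add_one hp hq,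
    real_inner_self_eq_norm_sq]
  rw [mmdProfile]
  ring_nf

end ClosedForm

theorem mmd_covariance_origin_local_max_general (d : ℕ) (σ : ℝ) (hσ : 0 < σ)
    (ε : ℝ) (astar : EuclideanSpace ℝ (Fin d)) (hastar : astar ≠ 0)
    (g : EuclideanSpace ℝ (Fin d) → ℝ)
    (hg : g = fun a : EuclideanSpace ℝ (Fin d) =>
      (((1 / σ ^ 2) • ((2 : ℝ) • vecMulVec a a + (2 * ε ^ 2) • 1) + 1).det) ^ (-(1 : ℝ) / 2)
      + (((1 / σ ^ 2) • ((2 : ℝ) • vecMulVec astar astar + (2 * ε ^ 2) • 1) + 1).det) ^ (-(1 : ℝ) / 2)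
      - 2 * (((1 / σ ^ 2) • (vecMulVec a a + vecMulVec astar astar + (2 * ε ^ 2) • 1) + 1).det) ^ (-(1 : ℝ) / 2)) :
    gradient g 0 = 0 ∧ IsLocalMax g 0 := by
  set β := 1 / σ ^ 2 / (1 + 1 / σ ^ 2 * (2 * ε ^ 2))
  have hβ : 0 < β := by positivity
  have hg_eq (a) : g a = (√((1 + 1 / σ ^ 2 * (2 * ε ^ 2)) ^ Fintype.card (Fin d)))⁻¹ *
      mmdProfile (β * ‖a‖ ^ 2) (β * ‖astar‖ ^ 2) ((β * ⟪a, astar⟫) ^ 2) := by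
    rw [hg]
    exact closedForm_eq_mul_mmdProfile (by positivity) (by positivity) a astar
  have hsmall : ∀ᶠ a in 𝓝 (0 : EuclideanSpace ℝ (Fin d)),
      (1 + β * ‖a‖ ^ 2) ^ 2 < 1 + β * ‖astar‖ ^ 2 := by
    refine ContinuousAt.eventually_lt (by fun_prop) continuousAt_const ?_
    have : 0 < β * ‖astar‖ ^ 2 := by positivity
    simpa only [norm_zero, ne_eq, OfNat.ofNat_ne_zero, not_false_eq_true, zero_pow, mul_zero,
      add_zero, one_pow, lt_add_iff_pos_right] using this
  have hmax : IsLocalMax g 0 := hsmall.mono fun a ha => by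
    rw [hg_eq, hg_eq, norm_zero, inner_zero_left]
    simp only [ne_eq, OfNat.ofNat_ne_zero, not_false_eq_true, zero_pow, mul_zero]
    gcongr
    exact mmdProfile_le_mmdProfile_zero (by positivity) (sq_nonneg _)
      (sq_mul_inner_le_mul β a astar) ha.le
  exact ⟨by simp [gradient, hmax.fderiv_eq_zero], hmax⟩

theorem mmd_covariance_origin_local_max (d : ℕ) (hd : 1 ≤ d) (σ : ℝ) (hσ : 0 < σ)
    (ε : ℝ) (hε : 0 ≤ ε) (astar : EuclideanSpace ℝ (Fin d)) (hastar : astar ≠ 0)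
    (g : EuclideanSpace ℝ (Fin d) → ℝ)
    (hg : g = fun a : EuclideanSpace ℝ (Fin d) =>
      (((1 / σ ^ 2) • ((2 : ℝ) • vecMulVec a a + (2 * ε ^ 2) • 1) + 1).det) ^ (-(1 : ℝ) / 2)
      + (((1 / σ ^ 2) • ((2 : ℝ) • vecMulVec astar astar + (2 * ε ^ 2) • 1) + 1).det) ^ (-(1 : ℝ) / 2)
      - 2 * (((1 / σ ^ 2) • (vecMulVec a a + vecMulVec astar astar + (2 * ε ^ 2) • 1) + 1).det) ^ (-(1 : ℝ) / 2)) :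
    gradient g 0 = 0 ∧ IsLocalMax g 0 :=
  mmd_covariance_origin_local_max_general d σ hσ ε astar hastar g hg
end

section
/- Let d ≥ 1, let C > 0, let μ* ∈ ℝ^d with μ* ≠ 0, and let B ∈ ℝ^{d×d} be symmetric positive definite. Define F : ℝ^d → ℝ by F(μ) := C·[ exp(-2 μᵀBμ) + 1 + exp(-2 μ*ᵀBμ*) + 1 − 2 exp(-(1/2)(μ−μ*)ᵀB(μ−μ*)) − 2 exp(-(1/2)(μ+μ*)ᵀB(μ+μ*)) ]. Then F(μ*) = F(−μ*) = 0 and F(μ) ≥ 0 for all μ ∈ ℝ^d; in particular μ* and −μ* are global minimizers of F. -/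
/-!
Write `q x = xᵀ B x`, `s = q μ`, `t = q μ*`, `a = q (μ - μ*)`, `b = q (μ + μ*)`.
By the parallelogram law `a + b = 2 s + 2 t`, so with `u = exp (-a/2)` and `v = exp (-b/2)`
we have `u v = exp (-s) exp (-t)`, and the bracket defining `F` becomes the sum of squares
`(exp (-s) - exp (-t))² + 2 (1 - u) (1 - v)`.
Since `B` is positive semidefinite, `a, b ≥ 0`, so `u, v ≤ 1` and both terms are nonnegative.
At `μ = ±μ*` the first term vanishes because `s = t`, and the second because `a = 0` or `b = 0`.
-/

open Matrix Real

noncomputable def mmdBracket (s t a b : ℝ) : ℝ :=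
  exp (-2 * s) + 1 + exp (-2 * t) + 1 - 2 * exp (-(1 / 2) * a) - 2 * exp (-(1 / 2) * b)

theorem mmdBracket_eq_sq_add_mul {s t a b : ℝ} (h : a + b = 2 * s + 2 * t) :
    mmdBracket s t a b = (exp (-s) - exp (-t)) ^ 2
      + 2 * (1 - exp (-(1 / 2) * a)) * (1 - exp (-(1 / 2) * b)) := by
  have hprod : exp (-(1 / 2) * a) * exp (-(1 / 2) * b) = exp (-s) * exp (-t) := by
    rw [← exp_add, ← exp_add]
    congr 1
    linarith
  have hs : exp (-2 * s) = exp (-s) ^ 2 := by rw [← exp_nat_mul]; ring_nf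
  have ht : exp (-2 * t) = exp (-t) ^ 2 := by rw [← exp_nat_mul]; ring_nf
  unfold mmdBracket
  linear_combination hs + ht - 2 * hprod

theorem mmdBracket_nonneg {s t a b : ℝ} (ha : 0 ≤ a) (hb : 0 ≤ b)
    (h : a + b = 2 * s + 2 * t) : 0 ≤ mmdBracket s t a b := by
  have hu : exp (-(1 / 2) * a) ≤ 1 := exp_le_one_iff.mpr (by linarith)
  have hv : exp (-(1 / 2) * b) ≤ 1 := exp_le_one_iff.mpr (by linarith)
  rw [mmdBracket_eq_sq_add_mul h]
  exact add_nonneg (sq_nonneg _)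
    (mul_nonneg (mul_nonneg zero_le_two (sub_nonneg.mpr hu)) (sub_nonneg.mpr hv))

theorem mmdBracket_eq_zero {s t a b : ℝ} (hst : s = t) (h : a + b = 2 * s + 2 * t)
    (hab : a = 0 ∨ b = 0) : mmdBracket s t a b = 0 := by
  rw [mmdBracket_eq_sq_add_mul h, hst]
  rcases hab with rfl | rfl <;> simp

theorem Matrix.parallelogram_law_dotProduct_mulVec {n R : Type*} [Fintype n] [CommRing R]
    (B : Matrix n n R) (x y : n → R) :
    (x - y) ⬝ᵥ (B *ᵥ (x - y)) + (x + y) ⬝ᵥ (B *ᵥ (x + y))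
      = 2 * (x ⬝ᵥ (B *ᵥ x)) + 2 * (y ⬝ᵥ (B *ᵥ y)) := by
  simp only [mulVec_sub, mulVec_add, sub_dotProduct, add_dotProduct, dotProduct_sub,
    dotProduct_add]
  ring

theorem mmdBracket_dotProduct_mulVec_nonneg {n : Type*} [Fintype n] {B : Matrix n n ℝ}
    (hB : B.PosSemidef) (x y : n → ℝ) :
    0 ≤ mmdBracket (x ⬝ᵥ (B *ᵥ x)) (y ⬝ᵥ (B *ᵥ y))
      ((x - y) ⬝ᵥ (B *ᵥ (x - y))) ((x + y) ⬝ᵥ (B *ᵥ (x + y))) := by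
  have hq : ∀ z : n → ℝ, 0 ≤ z ⬝ᵥ (B *ᵥ z) := by
    simpa using hB.dotProduct_mulVec_nonneg
  exact mmdBracket_nonneg (hq _) (hq _)
    (parallelogram_law_dotProduct_mulVec B x y)

theorem mmd_gmm_global_minima_general (d : ℕ) (C : ℝ) (hC : 0 < C)
    (μstar : EuclideanSpace ℝ (Fin d))
    (B : Matrix (Fin d) (Fin d) ℝ) (hB' : B.PosDef)
    (F : EuclideanSpace ℝ (Fin d) → ℝ)
    (hF : F = fun μ : EuclideanSpace ℝ (Fin d) =>
      C * (Real.exp (-2 * (μ ⬝ᵥ (B *ᵥ μ))) + 1 + Real.exp (-2 * (μstar ⬝ᵥ (B *ᵥ μstar))) + 1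
        - 2 * Real.exp (-(1 / 2) * ((μ - μstar) ⬝ᵥ (B *ᵥ (μ - μstar))))
        - 2 * Real.exp (-(1 / 2) * ((μ + μstar) ⬝ᵥ (B *ᵥ (μ + μstar)))))) :
    F μstar = 0 ∧ F (-μstar) = 0 ∧ ∀ μ : EuclideanSpace ℝ (Fin d), 0 ≤ F μ := by
  have hF_eq : ∀ μ : EuclideanSpace ℝ (Fin d),
      F μ = C * mmdBracket (μ.ofLp ⬝ᵥ (B *ᵥ μ.ofLp)) (μstar.ofLp ⬝ᵥ (B *ᵥ μstar.ofLp))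
      ((μ.ofLp - μstar.ofLp) ⬝ᵥ (B *ᵥ (μ.ofLp - μstar.ofLp)))
      ((μ.ofLp + μstar.ofLp) ⬝ᵥ (B *ᵥ (μ.ofLp + μstar.ofLp))) := fun μ => by
    subst hF; rfl
  refine ⟨?_, ?_, fun μ => ?_⟩
  · rw [hF_eq, mmdBracket_eq_zero rfl (parallelogram_law_dotProduct_mulVec B _ _)
      (.inl (by simp)), mul_zero]
  · rw [hF_eq, mmdBracket_eq_zero (by simp [mulVec_neg])
      (parallelogram_law_dotProduct_mulVec B _ _) (.inr (by simp)), mul_zero]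
  · rw [hF_eq]
    exact mul_nonneg hC.le (mmdBracket_dotProduct_mulVec_nonneg hB'.posSemidef _ _)

theorem mmd_gmm_global_minima (d : ℕ) (hd : 1 ≤ d) (C : ℝ) (hC : 0 < C)
    (μstar : EuclideanSpace ℝ (Fin d)) (hμstar : μstar ≠ 0)
    (B : Matrix (Fin d) (Fin d) ℝ) (hB : B.IsSymm) (hB' : B.PosDef)
    (F : EuclideanSpace ℝ (Fin d) → ℝ)
    (hF : F = fun μ : EuclideanSpace ℝ (Fin d) =>
      C * (Real.exp (-2 * (μ ⬝ᵥ (B *ᵥ μ))) + 1 + Real.exp (-2 * (μstar ⬝ᵥ (B *ᵥ μstar))) + 1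
        - 2 * Real.exp (-(1 / 2) * ((μ - μstar) ⬝ᵥ (B *ᵥ (μ - μstar))))
        - 2 * Real.exp (-(1 / 2) * ((μ + μstar) ⬝ᵥ (B *ᵥ (μ + μstar)))))) :
    F μstar = 0 ∧ F (-μstar) = 0 ∧ ∀ μ : EuclideanSpace ℝ (Fin d), 0 ≤ F μ :=
  mmd_gmm_global_minima_general d C hC μstar B hB' F hF
end

section
/- Let α ∈ (0,1) and define g : ℝ → ℝ by g(t) := (t−1)·α^{(t−1)²} + (t+1)·α^{(t+1)²} − 2t·α^{4t²}, where α^x := exp(x·log α) for real x. Then g(t) < 0 for all t ∈ (−∞,−1) ∪ (0,1), g(t) > 0 for all t ∈ (−1,0) ∪ (1,∞), and g(−1) = g(0) = g(1) = 0. -/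
/-! Write `a = f ((t+1)²)`, `b = f ((t-1)²)`, `c = f (4t²)` for a strictly decreasing `f`
(here `f x = α ^ x`), and `g t = (t+1) a + (t-1) b - 2t c`, which is odd in `t`.
For `t > 1` we have `(t-1)² < (t+1)² < 4t²`, so `b > a > c` and
`g t = (t+1)(a - c) + (t-1)(b - c) > 0`. For `0 < t < 1` we have `(t-1)² < (t+1)²` and
`4t² < (t+1)²`, so `a < b` and `a < c`, and `g t = 2t(a - c) + (1-t)(a - b) < 0`. -/

/-- The function `g` of the statement, with `α ^ ·` replaced by an arbitrary `f`. -/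
def lineSlope (f : ℝ → ℝ) (t : ℝ) : ℝ :=
  (t - 1) * f ((t - 1) ^ 2) + (t + 1) * f ((t + 1) ^ 2) - 2 * t * f (4 * t ^ 2)

namespace lineSlope

variable {f : ℝ → ℝ}

theorem neg (f : ℝ → ℝ) (t : ℝ) : lineSlope f (-t) = -lineSlope f t := by
  have h₁ : (-t - 1) ^ 2 = (t + 1) ^ 2 := by ring
  have h₂ : (-t + 1) ^ 2 = (t - 1) ^ 2 := by ring
  simp only [lineSlope, h₁, h₂, neg_sq]
  ring

theorem zero (f : ℝ → ℝ) : lineSlope f 0 = 0 := by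
  simp [lineSlope]

theorem one (f : ℝ → ℝ) : lineSlope f 1 = 0 := by
  norm_num [lineSlope]

theorem neg_one (f : ℝ → ℝ) : lineSlope f (-1) = 0 := by
  rw [neg, one, neg_zero]

theorem pos_of_one_lt (hf : StrictAnti f) {t : ℝ} (ht : 1 < t) : 0 < lineSlope f t := by
  have hba : f ((t + 1) ^ 2) < f ((t - 1) ^ 2) := hf (by nlinarith)
  have hac : f (4 * t ^ 2) < f ((t + 1) ^ 2) := hf (by nlinarith)
  have key : lineSlope f t
      = (t + 1) * (f ((t + 1) ^ 2) - f (4 * t ^ 2))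
        + (t - 1) * (f ((t - 1) ^ 2) - f (4 * t ^ 2)) := by
    unfold lineSlope; ring
  rw [key]
  have h₁ : 0 < (t + 1) * (f ((t + 1) ^ 2) - f (4 * t ^ 2)) :=
    mul_pos (by linarith) (sub_pos.2 hac)
  have h₂ : 0 < (t - 1) * (f ((t - 1) ^ 2) - f (4 * t ^ 2)) :=
    mul_pos (by linarith) (sub_pos.2 (hac.trans hba))
  linarith

theorem neg_of_pos_of_lt_one (hf : StrictAnti f) {t : ℝ} (ht₀ : 0 < t) (ht₁ : t < 1) :
    lineSlope f t < 0 := by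
  have hab : f ((t + 1) ^ 2) < f ((t - 1) ^ 2) := hf (by nlinarith)
  have hac : f ((t + 1) ^ 2) < f (4 * t ^ 2) := hf (by nlinarith)
  have key : lineSlope f t
      = 2 * t * (f ((t + 1) ^ 2) - f (4 * t ^ 2))
        + (1 - t) * (f ((t + 1) ^ 2) - f ((t - 1) ^ 2)) := by
    unfold lineSlope; ring
  rw [key]
  have h₁ : 2 * t * (f ((t + 1) ^ 2) - f (4 * t ^ 2)) < 0 :=
    mul_neg_of_pos_of_neg (by linarith) (sub_neg.2 hac)
  have h₂ : (1 - t) * (f ((t + 1) ^ 2) - f ((t - 1) ^ 2)) < 0 :=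
    mul_neg_of_pos_of_neg (by linarith) (sub_neg.2 hab)
  linarith

end lineSlope

theorem gmm_line_derivative_sign (α : ℝ) (hα0 : 0 < α) (hα1 : α < 1)
    (g : ℝ → ℝ)
    (hg : g = fun t : ℝ =>
      (t - 1) * α ^ ((t - 1) ^ 2) + (t + 1) * α ^ ((t + 1) ^ 2) - 2 * t * α ^ (4 * t ^ 2)) :
    (∀ t : ℝ, t < -1 ∨ (0 < t ∧ t < 1) → g t < 0) ∧
    (∀ t : ℝ, (-1 < t ∧ t < 0) ∨ 1 < t → 0 < g t) ∧
    g (-1) = 0 ∧ g 0 = 0 ∧ g 1 = 0 := by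
  have hf := Real.strictAnti_rpow_of_base_lt_one hα0 hα1
  obtain rfl : g = lineSlope (α ^ ·) := hg
  refine ⟨?_, ?_, lineSlope.neg_one _, lineSlope.zero _, lineSlope.one _⟩
  · rintro t (ht | ⟨ht₀, ht₁⟩)
    · have := lineSlope.pos_of_one_lt hf (t := -t) (by linarith)
      rw [lineSlope.neg] at this
      linarith
    · exact lineSlope.neg_of_pos_of_lt_one hf ht₀ ht₁
  · rintro t (⟨ht₀, ht₁⟩ | ht)
    · have := lineSlope.neg_of_pos_of_lt_one hf (t := -t) (by linarith) (by linarith)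
      rw [lineSlope.neg] at this
      linarith
    · exact lineSlope.pos_of_one_lt hf ht
end
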